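/- arXiv:math/0402288 — 2 statements merged into one kernel-verified Lean document; each statement's English description precedes it below -/
import Mathlib

section
/- Define the Catalan polynomials φ_k in ℚ[X] by φ_0 = 0, φ_1 = X, and the three-term recurrence X·φ_k = φ_{k-1} + 2·φ_k + φ_{k+1} (equivalently φ_{k+1} = (X-2)·φ_k - φ_{k-1}) for k ≥ 1. Then for every integer n ≥ 1 one has the triad expansion X^n = Σ_{k=1}^{n} (k/n)·binomial(2n, n-k) · φ_k. -/
/-!
Multiplying by `X` acts on coefficients in the basis `φ_k` through the recurrence
`X·φ_k = φ_{k-1} + 2φ_k + φ_{k+1}`, so the coefficients of `X^n` obey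
`c_{n+1,k} = c_{n,k-1} + 2c_{n,k} + c_{n,k+1}` with `c_{n,0} = 0` (matching `φ_0 = 0`).
The Catalan triangle obeys the same rule: in the ballot form
`C_{n,k} = binomial(2n-1, n+k-1) - binomial(2n-1, n+k)` it is Pascal's rule applied twice,
`(1 + y)^2 = 1 + 2y + y^2`, and `C_{n,0} = 0` is the symmetry of the middle binomials.
-/

open Polynomial

/-- The Catalan polynomials in `ℚ[X]`: `φ_0 = 0`, `φ_1 = X`, and
`φ_{k+1} = (X - 2)·φ_k - φ_{k-1}` (equivalently `X·φ_k = φ_{k-1} + 2φ_k + φ_{k+1}`)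
for `k ≥ 1`. -/
noncomputable def catalanPoly : ℕ → Polynomial ℚ
  | 0 => 0
  | 1 => X
  | (k + 2) => (X - 2) * catalanPoly (k + 1) - catalanPoly k

open Finset

lemma X_mul_catalanPoly_succ (k : ℕ) :
    X * catalanPoly (k + 1) = catalanPoly k + 2 * catalanPoly (k + 1) + catalanPoly (k + 2) := by
  rw [catalanPoly]; ring

lemma X_mul_sum_catalanPoly {N : ℕ} {f : ℕ → ℚ} (hf₀ : f 0 = 0) (hf : ∀ k, N < k → f k = 0) :
    X * ∑ i ∈ range N, C (f (i + 1)) * catalanPoly (i + 1) =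
      ∑ i ∈ range (N + 1), C (f i + 2 * f (i + 1) + f (i + 2)) * catalanPoly (i + 1) := by
  have down : ∑ i ∈ range (N + 1), C (f (i + 2)) * catalanPoly (i + 1) =
      ∑ i ∈ range N, C (f (i + 1)) * catalanPoly i := by
    have h := sum_range_succ' (fun i ↦ C (f (i + 1)) * catalanPoly i) (N + 1)
    rw [sum_range_succ, sum_range_succ] at h
    simpa [hf (N + 1) (by omega), hf (N + 2) (by omega), catalanPoly] using h.symm
  have stay : ∑ i ∈ range (N + 1), C (f (i + 1)) * catalanPoly (i + 1) =
      ∑ i ∈ range N, C (f (i + 1)) * catalanPoly (i + 1) := by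
    simp [sum_range_succ, hf (N + 1) (by omega)]
  have up : ∑ i ∈ range (N + 1), C (f i) * catalanPoly (i + 1) =
      ∑ i ∈ range N, C (f (i + 1)) * catalanPoly (i + 2) := by
    simp [sum_range_succ', hf₀]
  simp only [map_add, map_mul, map_ofNat, add_mul, sum_add_distrib, mul_assoc, ← mul_sum, up, stay,
    down]
  simp only [mul_sum, mul_left_comm X, X_mul_catalanPoly_succ, mul_add, sum_add_distrib,
    mul_left_comm _ (2 : ℚ[X])]
  ring

lemma Nat.choose_add_two_add_two (n k : ℕ) :
    (n + 2).choose (k + 2) = n.choose k + 2 * n.choose (k + 1) + n.choose (k + 2) := by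
  simp only [Nat.choose_succ_succ']; ring

/-- `catalanTriangle m k` is the entry `C_{m+1,k}` in its ballot-number form
`binomial(2m+1, m+k) - binomial(2m+1, m+k+1)`, which needs no division and vanishes by itself
for `k > m + 1`. -/
def catalanTriangle (m k : ℕ) : ℚ :=
  (2 * m + 1).choose (m + k) - (2 * m + 1).choose (m + k + 1)

namespace catalanTriangle

lemma zero_right (m : ℕ) : catalanTriangle m 0 = 0 := by
  simp [catalanTriangle, Nat.choose_symm_half]

lemma eq_zero_of_lt {m k : ℕ} (hk : m + 1 < k) : catalanTriangle m k = 0 := by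
  simp [catalanTriangle, Nat.choose_eq_zero_of_lt, show 2 * m + 1 < m + k by omega,
    show 2 * m + 1 < m + k + 1 by omega]

lemma succ_succ (m k : ℕ) :
    catalanTriangle (m + 1) (k + 1) =
      catalanTriangle m k + 2 * catalanTriangle m (k + 1) + catalanTriangle m (k + 2) := by
  have pascal (j : ℕ) : ((2 * (m + 1) + 1).choose (m + j + 2) : ℚ) =
      (2 * m + 1).choose (m + j) + 2 * (2 * m + 1).choose (m + j + 1) +
        (2 * m + 1).choose (m + j + 2) := by
    exact_mod_cast Nat.choose_add_two_add_two (2 * m + 1) (m + j)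
  rw [catalanTriangle, show m + 1 + (k + 1) = m + k + 2 by ring,
    show m + k + 2 + 1 = m + (k + 1) + 2 by ring, pascal, pascal]
  simp only [catalanTriangle]
  ring_nf

lemma eq_div_mul_choose {m k : ℕ} (hk : k ≤ m + 1) :
    catalanTriangle m k = k / (m + 1) * (2 * (m + 1)).choose (m + 1 - k) := by
  have symm : (2 * (m + 1)).choose (m + 1 - k) = (2 * m + 1 + 1).choose (m + k + 1) :=
    Nat.choose_symm_of_eq_add (by omega)
  have ratio := Nat.choose_succ_right_eq (2 * m + 1) (m + k)
  rw [show 2 * m + 1 - (m + k) = m + 1 - k by omega] at ratio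
  rw [symm, Nat.choose_succ_succ', catalanTriangle]
  qify [hk] at ratio
  push_cast
  field_simp
  linear_combination -ratio

end catalanTriangle

theorem X_pow_succ_eq_sum_catalanTriangle_mul_catalanPoly (m : ℕ) :
    (X : ℚ[X]) ^ (m + 1) =
      ∑ i ∈ range (m + 1), C (catalanTriangle m (i + 1)) * catalanPoly (i + 1) := by
  induction m with
  | zero => simp [catalanTriangle, catalanPoly]
  | succ m ih =>
    rw [pow_succ', ih, X_mul_sum_catalanPoly (catalanTriangle.zero_right m)
      (fun k hk ↦ catalanTriangle.eq_zero_of_lt hk)]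
    simp only [catalanTriangle.succ_succ]

/-- The triad expansion `X^n = Σ_{k=1}^{n} (k/n)·binomial(2n, n-k) · φ_k`. -/
theorem catalan_triad (n : ℕ) (hn : 1 ≤ n) :
    (X : Polynomial ℚ) ^ n =
      ∑ k ∈ Finset.Icc 1 n,
        C ((k : ℚ) / (n : ℚ) * (Nat.choose (2 * n) (n - k) : ℚ)) * catalanPoly k := by
  obtain ⟨m, rfl⟩ := Nat.exists_eq_add_of_le' hn
  rw [X_pow_succ_eq_sum_catalanTriangle_mul_catalanPoly, ← Ico_add_one_right_eq_Icc,
    sum_Ico_eq_sum_range, Nat.add_sub_cancel]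
  refine sum_congr rfl fun i hi ↦ ?_
  rw [add_comm 1 i, catalanTriangle.eq_div_mul_choose (by simp at hi; omega)]
  push_cast; rfl
end

section
/- For all integers n ≥ 0 and 1 ≤ k ≤ n+1, the Fibonomial coefficients satisfy the recurrence (n+1 choose k)_F = F_{k-1}·(n choose k)_F + F_{n-k+2}·(n choose k-1)_F, with the boundary conditions (n choose 0)_F = 1 and (n choose k)_F = 0 for k > n. -/
/-- The Fibonacci factorial `n_F! = F_n·F_{n-1}⋯F_1`, with `0_F! = 1`. -/
def fibFact (n : ℕ) : ℕ := ∏ i ∈ Finset.range n, Nat.fib (i + 1)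

/-- The Fibonomial coefficient `(n choose k)_F = n_F!/(k_F!·(n-k)_F!)` for
`k ≤ n`, and `0` for `k > n`. -/
def fibBinom (n k : ℕ) : ℚ :=
  if k ≤ n then (fibFact n : ℚ) / ((fibFact k : ℚ) * (fibFact (n - k) : ℚ)) else 0

/-! The recurrence is Pascal's rule with the Fibonacci addition formula
`F_{k+l+2} = F_k F_{l+1} + F_{k+1} F_{l+2}` in place of `k + l + 2 = (k + 1) + (l + 1)`:
writing `n = k + l`, both sides become `(n+1)_F! / ((k+1)_F! (l+1)_F!)` times that formula. -/

@[simp]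
lemma fibFact_zero : fibFact 0 = 1 := rfl

lemma fibFact_succ (n : ℕ) : fibFact (n + 1) = fibFact n * Nat.fib (n + 1) :=
  Finset.prod_range_succ _ n

lemma fibFact_pos (n : ℕ) : 0 < fibFact n :=
  Finset.prod_pos fun i _ => Nat.fib_pos.mpr i.succ_pos

lemma fibBinom_add_left (k l : ℕ) :
    fibBinom (k + l) k = fibFact (k + l) / (fibFact k * fibFact l) := by
  rw [fibBinom, if_pos (Nat.le_add_right k l), Nat.add_sub_cancel_left]

lemma fibBinom_of_lt {n k : ℕ} (h : n < k) : fibBinom n k = 0 :=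
  if_neg h.not_ge

@[simp]
lemma fibBinom_zero_right (n : ℕ) : fibBinom n 0 = 1 := by
  simpa [(fibFact_pos n).ne'] using fibBinom_add_left 0 n

@[simp]
lemma fibBinom_self (n : ℕ) : fibBinom n n = 1 := by
  simpa [(fibFact_pos n).ne'] using fibBinom_add_left n 0

lemma fibBinom_succ_succ (k l : ℕ) :
    fibBinom (k + l + 1) (k + 1) =
      Nat.fib k * fibBinom (k + l) (k + 1) + Nat.fib (l + 1) * fibBinom (k + l) k := by
  rcases l with _ | a
  · simp [fibBinom_of_lt (Nat.lt_succ_self k)]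
  have hfib : (Nat.fib (k + a + 2) : ℚ) =
      Nat.fib k * Nat.fib (a + 1) + Nat.fib (k + 1) * Nat.fib (a + 2) := by
    exact_mod_cast Nat.fib_add k (a + 1)
  rw [show k + (a + 1) + 1 = (k + 1) + (a + 1) by ring, fibBinom_add_left,
    fibBinom_add_left k (a + 1), show k + (a + 1) = (k + 1) + a by ring, fibBinom_add_left,
    ← add_assoc, fibFact_succ (k + 1 + a), fibFact_succ k, fibFact_succ a]
  have hk := (fibFact_pos k).ne'
  have ha := (fibFact_pos a).ne'
  have hka := (fibFact_pos (k + 1 + a)).ne'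
  have hfk := (Nat.fib_pos.mpr k.succ_pos).ne'
  have hfa := (Nat.fib_pos.mpr a.succ_pos).ne'
  push_cast
  rw [show k + 1 + a + 1 = k + a + 2 by ring, hfib]
  field_simp

theorem fibBinom_recurrence2 (n k : ℕ) (hk : 1 ≤ k) (hkn : k ≤ n + 1) :
    fibBinom (n + 1) k =
      (Nat.fib (k - 1) : ℚ) * fibBinom n k + (Nat.fib (n - k + 2) : ℚ) * fibBinom n (k - 1) ∧
    fibBinom n 0 = 1 ∧ ∀ j : ℕ, n < j → fibBinom n j = 0 := by
  refine ⟨?_, fibBinom_zero_right n, fun j => fibBinom_of_lt⟩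
  obtain ⟨m, rfl⟩ : ∃ m, k = m + 1 := ⟨k - 1, by omega⟩
  obtain ⟨l, rfl⟩ : ∃ l, n = m + l := ⟨n - m, by omega⟩
  -- at `k = n + 1` the truncated `n - k + 2` is `2`, not `1`; harmless since `F_2 = F_1`
  have hfib : Nat.fib (m + l - (m + 1) + 2) = Nat.fib (l + 1) := by
    rcases l with _ | l
    · simp
    · congr 1; omega
  rw [hfib, Nat.add_sub_cancel]
  exact fibBinom_succ_succ m l
end
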